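/- arXiv:2009.01106 — 6 statements merged into one kernel-verified Lean document; each statement's English description precedes it below -/
import Mathlib

section
/- Let G be a subgroup of the symmetric group S_d acting freely and transitively on {1,...,d}, and let m ≥ 2 be coprime to d. Then the set S(G,m) := (G^m / S_m) / G, where S_m acts on G^m by permuting coordinates and G acts by simultaneous right multiplication on all coordinates, has cardinality (1/d)·C(d+m-1, d-1), where C denotes the binomial coefficient. -/
set_option linter.unusedSectionVars false

/-- The relation on `m`-tuples of elements of `G` identifying two tuples iff one is
obtained from the other by permuting the coordinates and simultaneously multiplying
every coordinate on the right by a fixed element of `G`. -/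
def SGmRel (G : Type*) [Group G] (m : ℕ) (a b : Fin m → G) : Prop :=
  ∃ (σ : Equiv.Perm (Fin m)) (g : G), ∀ r, b r = a (σ r) * g

/-- `S(G,m) = (G^m / S_m) / G`: the quotient of `G^m` by permutation of coordinates
and simultaneous right multiplication. -/
def SGm (G : Type*) [Group G] (m : ℕ) : Type _ :=
  Quot (SGmRel G m)

section Aux

variable {K : Type*} [Group K] [Fintype K] [DecidableEq K] {m : ℕ}

/-- The multiset of values of a tuple. -/
private def MS (a : Fin m → K) : Multiset K := Multiset.map a Finset.univ.val

private lemma MS_card (a : Fin m → K) : Multiset.card (MS a) = m := by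
  simp [MS]

private lemma MS_ofFn (a : Fin m → K) : MS a = (List.ofFn a : Multiset K) := by
  simp only [MS, List.ofFn_eq_map, Fin.univ_def]
  rfl

private lemma MS_comp_perm (a : Fin m → K) (σ : Equiv.Perm (Fin m)) :
    MS (a ∘ σ) = MS a := by
  unfold MS
  conv_rhs => rw [← Multiset.map_univ_val_equiv σ]
  rw [Multiset.map_map]

private lemma MS_mul (a : Fin m → K) (g : K) :
    MS (fun r => a r * g) = Multiset.map (· * g) (MS a) := by
  unfold MS
  rw [Multiset.map_map]
  rfl

private lemma count_MS (a : Fin m → K) (x : K) :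
    (MS a).count x = (Finset.univ.filter fun i => a i = x).card := by
  rw [MS, Multiset.count_map]
  have : (Finset.univ.filter fun i => a i = x) = (Finset.univ.filter fun i => x = a i) := by
    ext i; simp [eq_comm]
  rw [this]
  rfl

private lemma exists_comp_perm {a c : Fin m → K} (h : MS a = MS c) :
    ∃ σ : Equiv.Perm (Fin m), a ∘ σ = c := by
  have hcard : ∀ x : K, Fintype.card {i // c i = x} = Fintype.card {i // a i = x} := by
    intro x
    rw [Fintype.card_subtype, Fintype.card_subtype, ← count_MS, ← count_MS, h]
  let e : ∀ x : K, {i // c i = x} ≃ {i // a i = x} := fun x => Fintype.equivOfCardEq (hcard x)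
  refine ⟨(Equiv.sigmaFiberEquiv c).symm.trans
      ((Equiv.sigmaCongrRight e).trans (Equiv.sigmaFiberEquiv a)), funext fun i => ?_⟩
  exact (e (c i) ⟨i, rfl⟩).2

private lemma exists_MS_list : ∀ (n : ℕ) (l : List K), l.length = n →
    ∃ a : Fin n → K, MS a = (l : Multiset K)
  | _, l, rfl => ⟨l.get, by rw [MS_ofFn, List.ofFn_get]⟩

private lemma free_dvd {g : K} {s : Multiset K}
    (hs : Multiset.map (· * g) s = s) : orderOf g ∣ Multiset.card s := by
  classical
  have hcount : ∀ x : K, s.count (x * g) = s.count x := by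
    intro x
    conv_lhs => rw [← hs]
    exact Multiset.count_map_eq_count' _ s (mul_left_injective g) x
  have hpow : ∀ (n : ℕ) (x : K), s.count (x * g ^ n) = s.count x := by
    intro n
    induction n with
    | zero => simp
    | succ n ih => intro x; rw [pow_succ, ← mul_assoc, hcount, ih]
  have hH : ∀ (x h : K), h ∈ Subgroup.zpowers g → s.count (x * h) = s.count x := by
    intro x h hh
    rw [← (isOfFinOrder_of_finite g).mem_powers_iff_mem_zpowers] at hh
    obtain ⟨n, rfl⟩ := hh
    exact hpow n x
  set H := Subgroup.zpowers g with hHdef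
  letI : Fintype (K ⧸ H) := Fintype.ofFinite _
  letI : DecidableEq (K ⧸ H) := Classical.decEq _
  have hsum : Multiset.card s = ∑ x : K, s.count x := by
    rw [← Multiset.toFinset_sum_count_eq s]
    apply Finset.sum_subset (Finset.subset_univ s.toFinset)
    intro x _ hx
    exact Multiset.count_eq_zero_of_notMem (by simpa using hx)
  have hfibcard : ∀ q : K ⧸ H,
      (Finset.univ.filter fun x : K => (QuotientGroup.mk x : K ⧸ H) = q).card = orderOf g := by
    intro q
    rw [← Fintype.card_subtype]
    have e1 : {x : K // (QuotientGroup.mk x : K ⧸ H) = q} ≃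
        (QuotientGroup.mk ⁻¹' ({q} : Set (K ⧸ H))) :=
      Equiv.subtypeEquivRight fun x => by simp
    have e2 := QuotientGroup.preimageMkEquivSubgroupProdSet H ({q} : Set (K ⧸ H))
    have : Nat.card {x : K // (QuotientGroup.mk x : K ⧸ H) = q} = orderOf g := by
      rw [Nat.card_congr (e1.trans e2), Nat.card_prod, Nat.card_zpowers]
      haveI : Unique ({q} : Set (K ⧸ H)) := Set.uniqueSingleton q
      rw [Nat.card_unique, mul_one]
    rw [← this, Nat.card_eq_fintype_card]
  have hinner : ∀ q : K ⧸ H,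
      ∑ x ∈ Finset.univ.filter (fun x : K => (QuotientGroup.mk x : K ⧸ H) = q), s.count x
        = orderOf g * s.count q.out := by
    intro q
    have hconst : ∀ x ∈ Finset.univ.filter (fun x : K => (QuotientGroup.mk x : K ⧸ H) = q),
        s.count x = s.count q.out := by
      intro x hx
      simp only [Finset.mem_filter, Finset.mem_univ, true_and] at hx
      have hq : (QuotientGroup.mk q.out : K ⧸ H) = q := QuotientGroup.out_eq' q
      have : q.out⁻¹ * x ∈ H := by
        rw [← QuotientGroup.eq]
        rw [hq, hx]
      calc s.count x = s.count (q.out * (q.out⁻¹ * x)) := by rw [mul_inv_cancel_left]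
        _ = s.count q.out := hH _ _ this
    rw [Finset.sum_congr rfl hconst, Finset.sum_const, smul_eq_mul, hfibcard q]
  have : Multiset.card s = orderOf g * ∑ q : K ⧸ H, s.count q.out := by
    rw [hsum, ← Finset.sum_fiberwise Finset.univ (fun x : K => (QuotientGroup.mk x : K ⧸ H))
      (fun x => s.count x)]
    rw [Finset.sum_congr rfl fun q _ => hinner q, ← Finset.mul_sum]
  exact ⟨_, this⟩

private lemma free_eq_one (hcop : Nat.Coprime m (Fintype.card K)) {g : K} {s : Multiset K}
    (hm : Multiset.card s = m) (hs : Multiset.map (· * g) s = s) : g = 1 := by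
  have h1 : orderOf g ∣ m := hm ▸ free_dvd hs
  have h2 : orderOf g ∣ Fintype.card K := orderOf_dvd_card
  have h3 : orderOf g ∣ Nat.gcd m (Fintype.card K) := Nat.dvd_gcd h1 h2
  rw [Nat.Coprime] at hcop
  rw [hcop, Nat.dvd_one] at h3
  exact orderOf_eq_one_iff.mp h3

/-- The setoid on `Sym K m` given by simultaneous right multiplication. -/
private def SRel (K : Type*) [Group K] (m : ℕ) : Setoid (Sym K m) where
  r s t := ∃ g : K, (t : Multiset K) = Multiset.map (· * g) (s : Multiset K)
  iseqv := by
    constructor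
    · exact fun s => ⟨1, by simp⟩
    · rintro s t ⟨g, h⟩
      refine ⟨g⁻¹, ?_⟩
      rw [h, Multiset.map_map]
      simp [Function.comp_def]
    · rintro s t u ⟨g, h⟩ ⟨g', h'⟩
      refine ⟨g * g', ?_⟩
      rw [h', h, Multiset.map_map]
      simp [Function.comp_def, mul_assoc]

private lemma main_count (hcop : Nat.Coprime m (Fintype.card K)) :
    Fintype.card K * Nat.card (SGm K m) = Nat.card (Sym K m) := by
  classical
  letI : Setoid (Sym K m) := SRel K m
  -- the equivalence between SGm K m and the quotient of Sym K m
  let F : SGm K m → Quotient (SRel K m) :=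
    Quot.lift (fun a => ⟦(⟨MS a, MS_card a⟩ : Sym K m)⟧) (by
      rintro a b ⟨σ, g, hb⟩
      apply Quotient.sound
      refine ⟨g, ?_⟩
      show MS b = Multiset.map (· * g) (MS a)
      have hb' : b = fun r => (a ∘ σ) r * g := funext hb
      rw [hb', MS_mul, MS_comp_perm])
  have hFbij : Function.Bijective F := by
    constructor
    · intro x y
      induction x using Quot.ind with | _ a =>
      induction y using Quot.ind with | _ c =>
      intro h
      have h' : (⟦(⟨MS a, MS_card a⟩ : Sym K m)⟧ : Quotient (SRel K m)) = ⟦⟨MS c, MS_card c⟩⟧ := h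
      obtain ⟨g, hg⟩ := Quotient.exact h'
      have hg' : MS c = MS (fun r => a r * g) := by rw [MS_mul]; exact hg
      obtain ⟨σ, hσ⟩ := exists_comp_perm hg'.symm
      apply Quot.sound
      exact ⟨σ, g, fun r => (congrFun hσ r).symm⟩
    · intro q
      induction q using Quotient.ind with | _ s =>
      obtain ⟨a, ha⟩ := exists_MS_list m s.1.toList (by rw [Multiset.length_toList, s.2])
      rw [Multiset.coe_toList] at ha
      exact ⟨Quot.mk _ a, congrArg (Quotient.mk _) (Subtype.ext ha)⟩
  -- the equivalence between (quotient × K) and Sym K m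
  let E : Quotient (SRel K m) × K → Sym K m :=
    fun p => ⟨Multiset.map (· * p.2) (p.1.out : Multiset K), by
      rw [Multiset.card_map]; exact p.1.out.2⟩
  have hEbij : Function.Bijective E := by
    constructor
    · rintro ⟨q, g⟩ ⟨q', g'⟩ h
      have h1 : Multiset.map (· * g) (q.out : Multiset K)
          = Multiset.map (· * g') (q'.out : Multiset K) := congrArg Subtype.val h
      have cancel : ∀ (v : Multiset K) (x y : K),
          Multiset.map (· * y⁻¹) (Multiset.map (· * x) v) = Multiset.map (· * (x * y⁻¹)) v := by
        intro v x y
        rw [Multiset.map_map]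
        simp [Function.comp_def, mul_assoc]
      have hq : q = q' := by
        rw [← Quotient.out_eq q, ← Quotient.out_eq q']
        apply Quotient.sound
        refine ⟨g * g'⁻¹, ?_⟩
        calc (q'.out : Multiset K)
            = Multiset.map (· * g'⁻¹) (Multiset.map (· * g') (q'.out : Multiset K)) := by
              rw [cancel]; simp
          _ = Multiset.map (· * g'⁻¹) (Multiset.map (· * g) (q.out : Multiset K)) := by rw [h1]
          _ = Multiset.map (· * (g * g'⁻¹)) (q.out : Multiset K) := cancel _ _ _
      subst hq
      have h2 : Multiset.map (· * (g * g'⁻¹)) (q.out : Multiset K) = (q.out : Multiset K) := by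
        rw [← cancel _ g g', h1, cancel]
        simp
      have : g * g'⁻¹ = 1 := free_eq_one hcop q.out.2 h2
      have : g = g' := by rwa [mul_inv_eq_one] at this
      exact Prod.ext rfl this
    · intro s
      have hrel : (SRel K m).r (Quotient.out ⟦s⟧) s := Quotient.mk_out s
      obtain ⟨g, hg⟩ := hrel
      exact ⟨(⟦s⟧, g), (Subtype.ext hg.symm : E (⟦s⟧, g) = s)⟩
  have hcard1 : Nat.card (SGm K m) = Nat.card (Quotient (SRel K m)) :=
    Nat.card_congr (Equiv.ofBijective F hFbij)
  have hcard2 : Nat.card (Quotient (SRel K m)) * Nat.card K = Nat.card (Sym K m) := by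
    rw [← Nat.card_prod]
    exact Nat.card_congr (Equiv.ofBijective E hEbij)
  rw [hcard1, ← hcard2, Nat.card_eq_fintype_card (α := K)]
  ring

end Aux

/-- Let `G ≤ S_d` act freely and transitively on `{1,...,d}` and `m ≥ 2` be coprime
to `d`. Then `S(G,m)` has cardinality `(1/d) C(d+m-1, d-1)`. -/
theorem stmt2 (d m : ℕ) (hm : 2 ≤ m) (hcop : Nat.Coprime m d)
    (G : Subgroup (Equiv.Perm (Fin d)))
    (hreg : ∀ i j : Fin d, ∃! g : G, (g : Equiv.Perm (Fin d)) i = j) :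
    d * Nat.card (SGm (↥G) m) = (d + m - 1).choose (d - 1) := by
  classical
  rcases Nat.eq_zero_or_pos d with hd0 | hd0
  · subst hd0
    rw [Nat.coprime_zero_right] at hcop
    omega
  letI : Fintype ↥G := Fintype.ofFinite _
  set i₀ : Fin d := ⟨0, hd0⟩
  have hcardG : Fintype.card ↥G = d := by
    have e : ↥G ≃ Fin d := Equiv.ofBijective (fun g => (g : Equiv.Perm (Fin d)) i₀) ⟨?_, ?_⟩
    · rw [Fintype.card_congr e, Fintype.card_fin]
    · intro g g' h
      obtain ⟨u, -, huniq⟩ := hreg i₀ ((g : Equiv.Perm (Fin d)) i₀)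
      exact (huniq g rfl).trans (huniq g' h.symm).symm
    · intro j
      obtain ⟨u, hu, -⟩ := hreg i₀ j
      exact ⟨u, hu⟩
  have h := main_count (K := ↥G) (m := m) (by rw [hcardG]; exact hcop)
  rw [hcardG, Nat.card_eq_fintype_card (α := Sym (↥G) m), Sym.card_sym_eq_choose, hcardG] at h
  rw [h]
  have h1 : d - 1 = (d + m - 1) - m := by omega
  rw [h1, Nat.choose_symm (by omega)]
end

section
/- Let G be a subgroup of S_d acting freely and transitively on {1,...,d}, let d = p be prime and m = kp for some k ≥ 1. Then the cardinality of S(G,m) = (G^m/S_m)/G equals (1/p)·(C(p+kp-1, p-1) - 1) + 1. -/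
/-!
Sending a tuple to the multiset of its coordinates identifies `S(G,m)` with the orbit space of
`G` acting by right multiplication on `Sym G m`, the multisets of size `m` in `G`. Burnside's
lemma gives `p · |S(G,m)| = ∑_g |Fix g|`. The identity fixes all `C(p+m-1, m)` multisets. Since
`|G| = p` is prime, any `g ≠ 1` generates `G`, so a multiset fixed by `g` has constant
multiplicity, and for `m = kp` the only one is `k` copies of `G`. Hence
`p · |S(G,kp)| = C(p+kp-1, p-1) + (p - 1)`.
-/

open MulAction MulOpposite

lemma List.Perm.exists_comp_perm_of_ofFn {α : Type*} {n : ℕ} {f g : Fin n → α}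
    (h : (List.ofFn f).Perm (List.ofFn g)) : ∃ σ : Equiv.Perm (Fin n), g = f ∘ σ := by
  classical
  -- sorting both tuples for an arbitrary linear order yields the same tuple
  let : LinearOrder α := linearOrderOfSTO WellOrderingRel
  have hsorted : f ∘ Tuple.sort f = g ∘ Tuple.sort g :=
    List.ofFn_injective <| List.Perm.eq_of_sortedLE (Tuple.monotone_sort f).sortedLE_ofFn
      (Tuple.monotone_sort g).sortedLE_ofFn
      ((((Tuple.sort f).ofFn_comp_perm f).trans h).trans ((Tuple.sort g).ofFn_comp_perm g).symm)
  refine ⟨(Tuple.sort g).symm.trans (Tuple.sort f), funext fun i => ?_⟩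
  simpa using (congrFun hsorted ((Tuple.sort g).symm i)).symm

namespace Sym

variable {M α : Type*} {n : ℕ}

instance instMulAction [Monoid M] [MulAction M α] : MulAction M (Sym α n) where
  smul g s := s.map (g • ·)
  one_smul s := by
    change s.map (1 • ·) = s
    simp only [one_smul, map_id']
  mul_smul g h s := by
    change s.map ((g * h) • ·) = (s.map (h • ·)).map (g • ·)
    simp only [map_map, Function.comp_def, mul_smul]

lemma coe_smul [Monoid M] [MulAction M α] (g : M) (s : Sym α n) :
    ((g • s : Sym α n) : Multiset α) = (s : Multiset α).map (g • ·) := rfl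

def ofFn (f : Fin n → α) : Sym α n := ⟨List.ofFn f, by simp⟩

lemma coe_ofFn (f : Fin n → α) : (ofFn f : Multiset α) = List.ofFn f := rfl

lemma smul_ofFn [Monoid M] [MulAction M α] (g : M) (f : Fin n → α) :
    g • ofFn f = ofFn (g • f) := by
  ext1
  simp only [coe_smul, coe_ofFn, Multiset.map_coe, List.map_ofFn]
  rfl

lemma ofFn_surjective : Function.Surjective (ofFn : (Fin n → α) → Sym α n) := by
  rintro ⟨s, hs⟩
  induction s using Quotient.inductionOn with
  | h l =>
    obtain rfl : l.length = n := hs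
    exact ⟨l.get, Subtype.ext (congrArg ((↑) : List α → Multiset α) (List.ofFn_get l))⟩

lemma ofFn_eq_ofFn_iff {f g : Fin n → α} :
    ofFn f = ofFn g ↔ ∃ σ : Equiv.Perm (Fin n), g = f ∘ σ := by
  constructor
  · intro h
    exact (Quotient.exact (congrArg Subtype.val h)).exists_comp_perm_of_ofFn
  · rintro ⟨σ, rfl⟩
    exact Subtype.ext (Quotient.sound (σ.ofFn_comp_perm f).symm)

end Sym

section SGm

variable {G : Type*} [Group G] {m : ℕ}

lemma sgmRel_iff_mem_orbit (a b : Fin m → G) :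
    SGmRel G m a b ↔ Sym.ofFn b ∈ orbit Gᵐᵒᵖ (Sym.ofFn a) := by
  simp only [mem_orbit_iff, Sym.smul_ofFn, Sym.ofFn_eq_ofFn_iff]
  constructor
  · rintro ⟨σ, g, h⟩
    exact ⟨op g, σ, funext h⟩
  · rintro ⟨g, σ, h⟩
    exact ⟨σ, g.unop, congrFun h⟩

noncomputable def SGm.equivOrbitRelQuotient : SGm G m ≃ orbitRel.Quotient Gᵐᵒᵖ (Sym G m) :=
  Equiv.ofBijective
    (Quot.lift (fun a => ⟦Sym.ofFn a⟧) fun a b h =>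
      (Quotient.sound ((sgmRel_iff_mem_orbit a b).1 h)).symm)
    ⟨by
      rintro ⟨a⟩ ⟨b⟩ h
      exact (Quot.sound ((sgmRel_iff_mem_orbit b a).2 (Quotient.exact h))).symm,
    by
      rintro ⟨s⟩
      obtain ⟨a, rfl⟩ := Sym.ofFn_surjective s
      exact ⟨Quot.mk _ a, rfl⟩⟩

end SGm

namespace Sym

variable {Γ α : Type*} [Group Γ] [MulAction Γ α] {n : ℕ}

lemma count_smul_of_mem_stabilizer [DecidableEq α] {s : Sym α n} {γ : Γ}
    (hγ : γ ∈ stabilizer Γ s) (a : α) :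
    Multiset.count (γ • a) (s : Multiset α) = Multiset.count a s := by
  conv_lhs => rw [← mem_stabilizer_iff.1 hγ, coe_smul]
  exact Multiset.count_map_eq_count' _ _ (MulAction.injective γ) a

lemma count_eq_count_of_zpowers_eq_top [DecidableEq α] [IsPretransitive Γ α] {g : Γ}
    (hg : Subgroup.zpowers g = ⊤) {s : Sym α n} (hs : g • s = s) (a b : α) :
    Multiset.count a (s : Multiset α) = Multiset.count b s := by
  have hstab : stabilizer Γ s = ⊤ := top_le_iff.1 (hg ▸ Subgroup.zpowers_le.2 hs)
  obtain ⟨γ, rfl⟩ := exists_smul_eq Γ a b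
  exact (count_smul_of_mem_stabilizer (hstab ▸ Subgroup.mem_top γ) a).symm

lemma subsingleton_fixedBy [Fintype α] [IsPretransitive Γ α] {g : Γ}
    (hg : Subgroup.zpowers g = ⊤) : (fixedBy (Sym α n) g).Subsingleton := by
  classical
  intro s hs t ht
  ext1
  ext a
  have hcount : ∀ u ∈ fixedBy (Sym α n) g,
      Fintype.card α * Multiset.count a (u : Multiset α) = n := fun u hu =>
    calc
      Fintype.card α * Multiset.count a (u : Multiset α)
          = ∑ b, Multiset.count b (u : Multiset α) := by
        simp [count_eq_count_of_zpowers_eq_top hg hu _ a]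
      _ = n := by rw [Multiset.sum_count_eq_card fun b _ => Finset.mem_univ b, Sym.card_coe]
  exact Nat.eq_of_mul_eq_mul_left (Fintype.card_pos_iff.2 ⟨a⟩)
    ((hcount s hs).trans (hcount t ht).symm)

def replicateUniv (α : Type*) [Fintype α] (k : ℕ) : Sym α (k * Fintype.card α) :=
  ⟨k • Finset.univ.val, by simp⟩

lemma smul_replicateUniv [Fintype α] (γ : Γ) (k : ℕ) :
    γ • replicateUniv α k = replicateUniv α k := by
  ext1
  change Multiset.map (γ • ·) (k • Finset.univ.val) = k • Finset.univ.val
  rw [Multiset.map_nsmul]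
  exact congrArg (k • ·) (Multiset.map_univ_val_equiv (MulAction.toPerm γ))

lemma fixedBy_eq_singleton [Fintype α] [IsPretransitive Γ α] {g : Γ}
    (hg : Subgroup.zpowers g = ⊤) (k : ℕ) :
    fixedBy (Sym α (k * Fintype.card α)) g = {replicateUniv α k} :=
  (subsingleton_fixedBy hg).eq_singleton_of_mem (smul_replicateUniv g k)

end Sym

theorem card_mul_card_orbitRel_quotient_sym {Γ α : Type*} [Group Γ] [MulAction Γ α]
    [Fintype α] [IsPretransitive Γ α] {p : ℕ} [Fact p.Prime] (hΓ : Nat.card Γ = p) (k : ℕ) :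
    p * Nat.card (orbitRel.Quotient Γ (Sym α (k * Fintype.card α)))
      = (Fintype.card α + k * Fintype.card α - 1).choose (k * Fintype.card α) + (p - 1) := by
  classical
  have : Finite Γ := Nat.finite_of_card_ne_zero (hΓ.trans_ne (Fact.out : p.Prime).ne_zero)
  have := Fintype.ofFinite Γ
  let X := Sym α (k * Fintype.card α)
  have hfix : ∀ g : Γ, g ≠ 1 → Fintype.card (fixedBy X g) = 1 := fun g hg => by
    rw [← Nat.card_eq_fintype_card,
      Sym.fixedBy_eq_singleton (zpowers_eq_top_of_prime_card hΓ hg) k, Nat.card_unique]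
  have hsum : ∑ g : Γ, Fintype.card (fixedBy X g) = Fintype.card X + (p - 1) := by
    rw [← Finset.add_sum_erase _ _ (Finset.mem_univ 1),
      Finset.sum_congr rfl fun g hg => hfix g (Finset.ne_of_mem_erase hg)]
    simp [Finset.card_erase_of_mem, ← Nat.card_eq_fintype_card, hΓ]
  have hburn := sum_card_fixedBy_eq_card_orbits_mul_card_group Γ X
  rw [hsum, Sym.card_sym_eq_choose, ← Nat.card_eq_fintype_card (α := Γ), hΓ] at hburn
  rw [Nat.card_eq_fintype_card, mul_comm, ← hburn]

lemma Subgroup.natCard_eq_of_existsUnique_apply_eq {X : Type*} [Nonempty X]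
    {G : Subgroup (Equiv.Perm X)} (hreg : ∀ i j : X, ∃! g : G, (g : Equiv.Perm X) i = j) :
    Nat.card G = Nat.card X := by
  obtain ⟨i₀⟩ := ‹Nonempty X›
  refine Nat.card_eq_of_bijective (fun g : G => (g : Equiv.Perm X) i₀) ⟨?_, ?_⟩
  · exact fun a b hab => (hreg i₀ _).unique rfl hab.symm
  · exact fun j => (hreg i₀ j).exists

theorem stmt3_general (p k : ℕ) (hp : p.Prime)
    (G : Subgroup (Equiv.Perm (Fin p)))
    (hreg : ∀ i j : Fin p, ∃! g : G, (g : Equiv.Perm (Fin p)) i = j) :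
    p * Nat.card (SGm (↥G) (k * p)) = ((p + k * p - 1).choose (p - 1) - 1) + p := by
  have : Fact p.Prime := ⟨hp⟩
  have hp₀ := hp.pos
  have : Nonempty (Fin p) := ⟨⟨0, hp₀⟩⟩
  have hG : Nat.card G = p :=
    (Subgroup.natCard_eq_of_existsUnique_apply_eq hreg).trans (Nat.card_fin p)
  have := Fintype.ofFinite G
  have hcount := card_mul_card_orbitRel_quotient_sym (Γ := Gᵐᵒᵖ) (α := G)
    ((Nat.card_congr opEquiv.symm).trans hG) k
  rw [← Nat.card_eq_fintype_card, hG] at hcount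
  have hchoose : (p + k * p - 1).choose (k * p) = (p + k * p - 1).choose (p - 1) :=
    Nat.choose_symm_of_eq_add (by omega)
  have hpos : 0 < (p + k * p - 1).choose (p - 1) := Nat.choose_pos (by omega)
  rw [Nat.card_congr SGm.equivOrbitRelQuotient, hcount, hchoose]
  omega

/-- Let `G ≤ S_p` (`p` prime) act freely and transitively on `{1,...,p}` and `m = k p`
with `k ≥ 1`. Then `S(G,m)` has cardinality `(1/p)(C(p+kp-1, p-1) - 1) + 1`. -/
theorem stmt3 (p k : ℕ) (hp : p.Prime) (hk : 1 ≤ k)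
    (G : Subgroup (Equiv.Perm (Fin p)))
    (hreg : ∀ i j : Fin p, ∃! g : G, (g : Equiv.Perm (Fin p)) i = j) :
    p * Nat.card (SGm (↥G) (k * p)) = ((p + k * p - 1).choose (p - 1) - 1) + p :=
  stmt3_general p k hp G hreg
end

section
/- Let G be a subgroup of S_p (p prime) acting freely and transitively on {1,...,p}, and let m = kp. Then Σ over classes [(g_1,...,g_m)] ∈ S(G,m) of φ_{(g_1,...,g_m)}(x_1,...,x_p) equals f_{p,m}(x_1,...,x_p) + (p-1)·x_1^k ⋯ x_p^k, where f_{p,m} is the sum of all degree-m monomials in p variables. -/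
open Finset

section FiberCard

variable {ι β γ : Type*} [Fintype ι] [DecidableEq β]

def fiberCard (f : ι → β) (b : β) : ℕ := #{i | f i = b}

lemma fiberCard_comp_perm (f : ι → β) (σ : Equiv.Perm ι) : fiberCard (f ∘ σ) = fiberCard f := by
  funext b
  simp only [fiberCard, card_filter, Function.comp_apply]
  exact Equiv.sum_comp σ (fun i => if f i = b then 1 else 0)

lemma fiberCard_equiv_comp [DecidableEq γ] (e : β ≃ γ) (f : ι → β) :
    fiberCard (e ∘ f) = fiberCard f ∘ e.symm := by
  funext c
  simp only [fiberCard, Function.comp_apply, ← e.eq_symm_apply]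

lemma sum_fiberCard [Fintype β] (f : ι → β) : ∑ b, fiberCard f b = Fintype.card ι :=
  (card_eq_sum_card_fiberwise fun i _ => mem_univ (f i)).symm

lemma prod_comp_eq_prod_pow_fiberCard [Fintype β] {M : Type*} [CommMonoid M] (g : β → M)
    (f : ι → β) : ∏ i, g (f i) = ∏ b, g b ^ fiberCard f b := by
  rw [← prod_fiberwise' univ f g]
  simp only [prod_const, fiberCard]

lemma exists_perm_of_fiberCard_eq {f f' : ι → β} (h : fiberCard f = fiberCard f') :
    ∃ σ : Equiv.Perm ι, f' = f ∘ σ := by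
  classical
  have e : ∀ b, { i // f' i = b } ≃ { i // f i = b } := fun b =>
    Fintype.equivOfCardEq (by simpa [fiberCard, Fintype.card_subtype] using (congrFun h b).symm)
  exact ⟨Equiv.ofFiberEquiv e, funext fun i => (Equiv.ofFiberEquiv_map e i).symm⟩

lemma exists_fiberCard_eq [Fintype β] {m : ℕ} (n : β → ℕ) (hn : ∑ b, n b = m) :
    ∃ f : Fin m → β, fiberCard f = n := by
  let e : (Σ b, Fin (n b)) ≃ Fin m := Fintype.equivOfCardEq (by simp [hn])
  refine ⟨fun r => (e.symm r).1, funext fun b => ?_⟩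
  simp only [fiberCard, card_filter]
  rw [Equiv.sum_comp e.symm (fun s => if s.1 = b then 1 else 0), ← univ_sigma_univ, sum_sigma]
  simp [apply_ite]

end FiberCard

lemma apply_eq_apply_one_of_mul_right_invariant {G β : Type*} [Group G] {p : ℕ} [Fact p.Prime]
    (hG : Nat.card G = p) {h : G} (hh : h ≠ 1) {f : G → β} (hf : ∀ x, f (x * h) = f x)
    (x : G) : f x = f 1 := by
  obtain ⟨j, rfl⟩ := (Submonoid.mem_powers_iff _ _).mp (mem_powers_of_prime_card hG hh (g' := x))
  induction j with
  | zero => rw [pow_zero]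
  | succ j ih => rw [pow_succ, hf, ih]

lemma sum_ite_smul_eq_add {ι M : Type*} [AddCommMonoid M] [DecidableEq ι] {s : Finset ι} {i₀ : ι}
    (hi₀ : i₀ ∈ s) (n : ℕ) (f : ι → M) :
    ∑ i ∈ s, (if i = i₀ then n + 1 else 1) • f i = ∑ i ∈ s, f i + n • f i₀ := by
  have hsplit : ∀ i, (if i = i₀ then n + 1 else 1) • f i = f i + if i = i₀ then n • f i else 0 := by
    intro i
    split_ifs <;> simp [add_smul, add_comm]
  simp_rw [hsplit, sum_add_distrib, sum_ite_eq' s i₀, if_pos hi₀]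

lemma SGmRel.equivalence (G : Type*) [Group G] (m : ℕ) : Equivalence (SGmRel G m) where
  refl _ := ⟨1, 1, fun _ => by simp⟩
  symm := by
    rintro a b ⟨σ, g, h⟩
    exact ⟨σ⁻¹, g⁻¹, fun r => by simp [h]⟩
  trans := by
    rintro a b c ⟨σ, g, h⟩ ⟨τ, g', h'⟩
    exact ⟨σ * τ, g * g', fun r => by simp [h', h, mul_assoc]⟩

lemma SGm.mk_eq_mk_iff {G : Type*} [Group G] {m : ℕ} {a b : Fin m → G} :
    Quot.mk (SGmRel G m) a = Quot.mk (SGmRel G m) b ↔ SGmRel G m a b :=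
  Quot.eq.trans (SGmRel.equivalence G m).eqvGen_iff

section RegularAction

variable {α : Type*} {G : Subgroup (Equiv.Perm α)}

noncomputable def orbitEquiv (hreg : ∀ i j : α, ∃! g : G, (g : Equiv.Perm α) i = j) (i : α) :
    G ≃ α :=
  Equiv.ofBijective (fun g => (g : Equiv.Perm α) i)
    ⟨fun _ _ h => (hreg i _).unique rfl h.symm, fun j => (hreg i j).exists⟩

@[simp]
lemma orbitEquiv_apply (hreg : ∀ i j : α, ∃! g : G, (g : Equiv.Perm α) i = j) (i : α) (g : G) :
    orbitEquiv hreg i g = (g : Equiv.Perm α) i :=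
  rfl

variable [DecidableEq α] {m : ℕ}

/-- The exponent vector of the monomial `∏ r, x_{g_r(i)}`. -/
def expVec (g : Fin m → G) (i : α) : α → ℕ := fiberCard fun r => (g r : Equiv.Perm α) i

lemma expVec_comp_mul (g : Fin m → G) (σ : Equiv.Perm (Fin m)) (h : G) (i : α) :
    expVec (fun r => g (σ r) * h) i = expVec g ((h : Equiv.Perm α) i) :=
  fiberCard_comp_perm (fun r => (g r : Equiv.Perm α) ((h : Equiv.Perm α) i)) σ

lemma sum_expVec [Fintype α] (g : Fin m → G) (i : α) : ∑ j, expVec g i j = m := by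
  simpa [expVec] using sum_fiberCard fun r => (g r : Equiv.Perm α) i

lemma expVec_eq_fiberCard [DecidableEq G]
    (hreg : ∀ i j : α, ∃! g : G, (g : Equiv.Perm α) i = j) (g : Fin m → G) (i : α) :
    expVec g i = fiberCard g ∘ (orbitEquiv hreg i).symm :=
  fiberCard_equiv_comp (orbitEquiv hreg i) g

lemma expVec_eq_const_iff [DecidableEq G]
    (hreg : ∀ i j : α, ∃! g : G, (g : Equiv.Perm α) i = j) {g : Fin m → G} {i : α} {k : ℕ} :
    expVec g i = (fun _ => k) ↔ fiberCard g = fun _ => k := by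
  rw [expVec_eq_fiberCard hreg]
  constructor
  · intro h
    funext x
    simpa only [Function.comp_apply, Equiv.symm_apply_apply] using
      congrFun h (orbitEquiv hreg i x)
  · intro h
    rw [h]
    rfl

lemma exists_rel_of_expVec_eq (hreg : ∀ i j : α, ∃! g : G, (g : Equiv.Perm α) i = j)
    {g g' : Fin m → G} {i i' : α} (hgg' : expVec g i = expVec g' i') :
    ∃ (σ : Equiv.Perm (Fin m)) (h : G), (∀ r, g' r = g (σ r) * h) ∧ (h : Equiv.Perm α) i' = i := by
  set h := (orbitEquiv hreg i').symm i
  have hh : (h : Equiv.Perm α) i' = i := (orbitEquiv hreg i').apply_symm_apply i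
  have hinv : ((h⁻¹ : G) : Equiv.Perm α) i = i' := by simp [← hh]
  have hg' : expVec g i = expVec (fun r => g' r * h⁻¹) i := by
    rw [hgg', ← hinv]
    exact (expVec_comp_mul g' 1 h⁻¹ i).symm
  obtain ⟨σ, hσ⟩ := exists_perm_of_fiberCard_eq hg'
  refine ⟨σ, h, fun r => ?_, hh⟩
  have hr : g' r * h⁻¹ = g (σ r) := (orbitEquiv hreg i).injective (congrFun hσ r)
  rw [← hr, inv_mul_cancel_right]

end RegularAction

section Classes

variable {α : Type*} {G : Subgroup (Equiv.Perm α)} {m : ℕ}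

lemma fiberCard_eq_const_of_rel_self [DecidableEq G] {p k : ℕ} (hp : p.Prime)
    (hG : Nat.card G = p) (hm : m = k * p) {g : Fin m → G} {σ : Equiv.Perm (Fin m)} {h : G}
    (hrel : ∀ r, g r = g (σ r) * h) (hh : h ≠ 1) : fiberCard g = fun _ => k := by
  have : Fact p.Prime := ⟨hp⟩
  have : Fintype G := @Fintype.ofFinite G (Nat.finite_of_card_ne_zero (hG ▸ hp.ne_zero))
  have hinv : fiberCard g = fiberCard g ∘ (Equiv.mulRight h).symm := by
    calc fiberCard g = fiberCard (Equiv.mulRight h ∘ g ∘ σ) := congrArg fiberCard (funext hrel)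
      _ = fiberCard g ∘ (Equiv.mulRight h).symm := by
        rw [fiberCard_equiv_comp, fiberCard_comp_perm]
  have hconst : ∀ x, fiberCard g x = fiberCard g 1 :=
    apply_eq_apply_one_of_mul_right_invariant hG (inv_ne_one.mpr hh) fun x => by
      simpa [Equiv.mulRight_symm] using (congrFun hinv x).symm
  have hsum : p * fiberCard g 1 = k * p := by
    calc p * fiberCard g 1 = ∑ x : G, fiberCard g x := by
          rw [sum_congr rfl fun x _ => hconst x, sum_const, card_univ, ← Nat.card_eq_fintype_card,
            hG, smul_eq_mul]
      _ = k * p := by rw [sum_fiberCard, Fintype.card_fin, hm]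
  funext x
  rw [hconst x]
  exact Nat.eq_of_mul_eq_mul_left hp.pos (hsum.trans (mul_comm k p))

variable [DecidableEq α]

/-- Computed from the representative `Quot.out c`; another representative only relabels `i`
(`exists_classExpVec_mk_eq`). -/
noncomputable def classExpVec (ci : SGm G m × α) : α → ℕ := expVec (Quot.out ci.1) ci.2

lemma eq_of_classExpVec_eq (hreg : ∀ i j : α, ∃! g : G, (g : Equiv.Perm α) i = j)
    {c c' : SGm G m} {i i' : α} (h : classExpVec (c, i) = classExpVec (c', i')) : c = c' := by
  obtain ⟨σ, g, hrel, -⟩ := exists_rel_of_expVec_eq hreg h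
  rw [← Quot.out_eq c, ← Quot.out_eq c']
  exact Quot.sound ⟨σ, g, hrel⟩

lemma exists_classExpVec_mk_eq (g : Fin m → G) (i : α) :
    ∃ i', classExpVec (Quot.mk (SGmRel G m) g, i') = expVec g i := by
  obtain ⟨σ, h, hrel⟩ := SGm.mk_eq_mk_iff.mp (Quot.out_eq (Quot.mk (SGmRel G m) g))
  refine ⟨(h : Equiv.Perm α) i, ?_⟩
  have hg : g = fun r => Quot.out (Quot.mk (SGmRel G m) g) (σ r) * h := funext hrel
  conv_rhs => rw [hg]
  exact (expVec_comp_mul _ σ h i).symm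

lemma exists_classExpVec_eq (hreg : ∀ i j : α, ∃! g : G, (g : Equiv.Perm α) i = j) [Fintype α]
    (i₀ : α) (a : α → ℕ) (ha : ∑ j, a j = m) : ∃ ci : SGm G m × α, classExpVec ci = a := by
  obtain ⟨f, hf⟩ := exists_fiberCard_eq a ha
  obtain ⟨i, hi⟩ := exists_classExpVec_mk_eq (fun r => (orbitEquiv hreg i₀).symm (f r)) i₀
  refine ⟨_, hi.trans ?_⟩
  simp only [expVec, ← orbitEquiv_apply hreg, Equiv.apply_symm_apply]
  exact hf

lemma card_classExpVec_fiber (hreg : ∀ i j : α, ∃! g : G, (g : Equiv.Perm α) i = j)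
    [Fintype α] [DecidableEq G] [Fintype (SGm G m)] {p k : ℕ} (hp : p.Prime)
    (hα : Fintype.card α = p) (hm : m = k * p) (a : α → ℕ) (ha : ∑ j, a j = m) :
    #{ci : SGm G m × α | classExpVec ci = a} = if a = (fun _ => k) then p else 1 := by
  obtain ⟨i₀⟩ : Nonempty α := Fintype.card_pos_iff.mp (hα ▸ hp.pos)
  have hG : Nat.card G = p := by
    rw [Nat.card_congr (orbitEquiv hreg i₀), Nat.card_eq_fintype_card, hα]
  obtain ⟨⟨c, i⟩, hci⟩ := exists_classExpVec_eq hreg i₀ a ha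
  have hconst : ∀ i', classExpVec (c, i') = a → i' ≠ i → a = fun _ => k := by
    intro i' hi' hne
    obtain ⟨σ, g, hrel, hg⟩ := exists_rel_of_expVec_eq hreg (hci.trans hi'.symm)
    have hg1 : g ≠ 1 := by
      rintro rfl
      exact hne hg
    rw [← hci]
    exact (expVec_eq_const_iff hreg).mpr (fiberCard_eq_const_of_rel_self hp hG hm hrel hg1)
  split_ifs with hak
  · subst hak
    have hfiber : ({ci : SGm G m × α | classExpVec ci = fun _ => k} : Finset _) = {c} ×ˢ univ := by
      ext ⟨c', i'⟩
      simp only [mem_filter, mem_univ, true_and, mem_product, mem_singleton, and_true]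
      constructor
      · intro h
        exact eq_of_classExpVec_eq hreg (h.trans hci.symm)
      · rintro rfl
        exact (expVec_eq_const_iff hreg).mpr ((expVec_eq_const_iff hreg).mp hci)
    rw [hfiber, card_product, card_singleton, one_mul, card_univ, hα]
  · refine card_eq_one.mpr ⟨(c, i), ?_⟩
    ext ⟨c', i'⟩
    simp only [mem_filter, mem_univ, true_and, mem_singleton]
    constructor
    · intro h
      obtain rfl := eq_of_classExpVec_eq hreg (h.trans hci.symm)
      by_contra hne
      exact hak (hconst i' h fun hi => hne (by rw [hi]))
    · rintro ⟨⟩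
      exact hci

lemma sum_classExpVec_eq (hreg : ∀ i j : α, ∃! g : G, (g : Equiv.Perm α) i = j)
    [Fintype α] [DecidableEq G] [Fintype (SGm G m)] {p k : ℕ} (hp : p.Prime)
    (hα : Fintype.card α = p) (hm : m = k * p) {M : Type*} [AddCommMonoid M] (f : (α → ℕ) → M) :
    ∑ ci : SGm G m × α, f (classExpVec ci) =
      ∑ a ∈ (Fintype.piFinset fun _ : α => range (m + 1)).filter (fun a => ∑ j, a j = m), f a +
        (p - 1) • f (fun _ => k) := by
  set A := (Fintype.piFinset fun _ : α => range (m + 1)).filter (fun a => ∑ j, a j = m)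
  have hmem : ∀ {a : α → ℕ}, ∑ j, a j = m → a ∈ A := fun {a} ha =>
    mem_filter.mpr ⟨Fintype.mem_piFinset.mpr fun j => mem_range.mpr
      (Nat.lt_succ_of_le (ha ▸ single_le_sum (fun _ _ => Nat.zero_le _) (mem_univ j))), ha⟩
  rw [← sum_fiberwise_of_maps_to' (g := classExpVec) (fun ci _ => hmem (sum_expVec _ _)) f]
  have hfiber : ∀ a ∈ A, ∑ ci : SGm G m × α with classExpVec ci = a, f a =
      (if a = fun _ => k then (p - 1) + 1 else 1) • f a := by
    intro a ha
    rw [sum_const, card_classExpVec_fiber hreg hp hα hm a (mem_filter.mp ha).2,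
      Nat.sub_add_cancel hp.one_le]
  rw [sum_congr rfl hfiber, sum_ite_smul_eq_add (hmem (by simp [hm, hα, mul_comm]))]

end Classes

theorem stmt6_general (p k : ℕ) (hp : p.Prime)
    (G : Subgroup (Equiv.Perm (Fin p)))
    (hreg : ∀ i j : Fin p, ∃! g : G, (g : Equiv.Perm (Fin p)) i = j)
    (R : Type*) [CommRing R]
    (Φ : SGm (↥G) (k * p) → MvPolynomial (Fin p) R)
    (hΦ : ∀ g : Fin (k * p) → ↥G,
      Φ (Quot.mk (SGmRel (↥G) (k * p)) g) =
        ∑ i : Fin p, ∏ r : Fin (k * p), MvPolynomial.X ((g r : Equiv.Perm (Fin p)) i)) :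
    ∑ᶠ c : SGm (↥G) (k * p), Φ c =
      (∑ a ∈ (Fintype.piFinset fun _ : Fin p => Finset.range (k * p + 1)).filter
          (fun a => ∑ i, a i = k * p),
        ∏ i : Fin p, (MvPolynomial.X i : MvPolynomial (Fin p) R) ^ a i) +
      (p - 1) • ∏ i : Fin p, (MvPolynomial.X i : MvPolynomial (Fin p) R) ^ k := by
  have : Fintype (SGm G (k * p)) := @Fintype.ofFinite _ (Quot.finite _)
  have hΦ' : ∀ c, Φ c = ∑ i, ∏ j, MvPolynomial.X j ^ classExpVec (c, i) j := fun c => by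
    conv_lhs => rw [← Quot.out_eq c]
    simp only [hΦ, prod_comp_eq_prod_pow_fiberCard]
    rfl
  rw [finsum_eq_sum_of_fintype, ← sum_classExpVec_eq hreg hp (Fintype.card_fin p) rfl,
    Fintype.sum_prod_type]
  exact sum_congr rfl fun c _ => hΦ' c

/-- Let `G ≤ S_p` (`p` prime) act freely and transitively on `{1,...,p}` and `m = k p`.
The sum over classes `c ∈ S(G,m)` of the polynomials `φ_c` equals the sum of all
monomials of degree `m` in `p` variables plus `(p-1) · X_1^k ⋯ X_p^k`. -/
theorem stmt6 (p k : ℕ) (hp : p.Prime) (hk : 1 ≤ k)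
    (G : Subgroup (Equiv.Perm (Fin p)))
    (hreg : ∀ i j : Fin p, ∃! g : G, (g : Equiv.Perm (Fin p)) i = j)
    (R : Type*) [CommRing R]
    (Φ : SGm (↥G) (k * p) → MvPolynomial (Fin p) R)
    (hΦ : ∀ g : Fin (k * p) → ↥G,
      Φ (Quot.mk (SGmRel (↥G) (k * p)) g) =
        ∑ i : Fin p, ∏ r : Fin (k * p), MvPolynomial.X ((g r : Equiv.Perm (Fin p)) i)) :
    ∑ᶠ c : SGm (↥G) (k * p), Φ c =
      (∑ a ∈ (Fintype.piFinset fun _ : Fin p => Finset.range (k * p + 1)).filter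
          (fun a => ∑ i, a i = k * p),
        ∏ i : Fin p, (MvPolynomial.X i : MvPolynomial (Fin p) R) ^ a i) +
      (p - 1) • ∏ i : Fin p, (MvPolynomial.X i : MvPolynomial (Fin p) R) ^ k :=
  stmt6_general p k hp G hreg R Φ hΦ
end

section
/- Let G be a subgroup of S_d acting freely and transitively on {1,...,d} with m coprime to d (or d prime). Suppose a monomial x_{g_1(i)}⋯x_{g_m(i)} appearing in φ_{[(g_1,...,g_m)]} equals a monomial x_{h_1(j)}⋯x_{h_m(j)} appearing in φ_{[(h_1,...,h_m)]}. Then [(g_1,...,g_m)] = [(h_1,...,h_m)] in S(G,m). -/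
/-!
Equal multisets of indices give a permutation `σ` with `h r j = g (σ r) i`. Taking the
`t ∈ G` with `t j = i`, the elements `h r` and `g (σ r) * t` agree at `j`, so they are
equal because `G` acts freely; thus `h` is obtained from `g` by `σ` and right
multiplication by `t`.
-/

open Finset in
theorem exists_perm_comp_eq_of_map_univ_eq {ι α : Type*} [Fintype ι] [DecidableEq α]
    {f f' : ι → α} (h : univ.val.map f = univ.val.map f') :
    ∃ σ : Equiv.Perm ι, f' = f ∘ σ := by
  have hfiber (a : α) : Fintype.card {x // f' x = a} = Fintype.card {x // f x = a} := by
    simpa only [Multiset.count_map, Fintype.card_subtype, card_def, filter_val,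
      eq_comm (a := a)] using congrArg (Multiset.count a) h.symm
  let σ : ι ≃ ι := Equiv.ofFiberEquiv fun a => Fintype.equivOfCardEq (hfiber a)
  exact ⟨σ, funext fun x => (Equiv.ofFiberEquiv_map _ x).symm⟩

theorem stmt7_general (d m : ℕ) (G : Subgroup (Equiv.Perm (Fin d)))
    (hreg : ∀ i j : Fin d, ∃! g : G, (g : Equiv.Perm (Fin d)) i = j)
    (g h : Fin m → ↥G) (i j : Fin d)
    (hmon : Multiset.map (fun r => (g r : Equiv.Perm (Fin d)) i) Finset.univ.val =
      Multiset.map (fun r => (h r : Equiv.Perm (Fin d)) j) Finset.univ.val) :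
    Quot.mk (SGmRel (↥G) m) g = Quot.mk (SGmRel (↥G) m) h := by
  obtain ⟨σ, hσ⟩ := exists_perm_comp_eq_of_map_univ_eq hmon
  obtain ⟨t, ht, -⟩ := hreg j i
  refine Quot.sound ⟨σ, t, fun r => (hreg j _).unique rfl ?_⟩
  simp [ht, congrFun hσ r]

/-- Let `G ≤ S_d` act freely and transitively on `{1,...,d}`, with `m` coprime to `d`
or `d` prime. If a monomial `X_{g_1(i)} ⋯ X_{g_m(i)}` of `φ_{[(g_1,...,g_m)]}` equals a
monomial `X_{h_1(j)} ⋯ X_{h_m(j)}` of `φ_{[(h_1,...,h_m)]}` (equality of the multisets of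
indices), then `[(g_1,...,g_m)] = [(h_1,...,h_m)]` in `S(G,m)`. -/
theorem stmt7 (d m : ℕ) (hm : 2 ≤ m) (hdm : Nat.Coprime m d ∨ d.Prime)
    (G : Subgroup (Equiv.Perm (Fin d)))
    (hreg : ∀ i j : Fin d, ∃! g : G, (g : Equiv.Perm (Fin d)) i = j)
    (g h : Fin m → ↥G) (i j : Fin d)
    (hmon : Multiset.map (fun r => (g r : Equiv.Perm (Fin d)) i) Finset.univ.val =
      Multiset.map (fun r => (h r : Equiv.Perm (Fin d)) j) Finset.univ.val) :
    Quot.mk (SGmRel (↥G) m) g = Quot.mk (SGmRel (↥G) m) h :=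
  stmt7_general d m G hreg g h i j hmon
end

section
/- For integers d ≥ 2 and m ≥ 2 with m coprime to d if d is not prime, the quantity b(d,m) := (1/d)·(C(d+m-1, d-1) - C(m-1, d-1)) is a positive integer, where C(m-1,d-1) is interpreted as 0 when m < d. -/
/-!
For prime `d` the two binomial coefficients agree modulo `d` by Lucas' theorem, since their upper
arguments differ by `d` and `d - 1 < d`. Otherwise the absorption identities
`m * C(d+m-1, d-1) = d * C(d+m-1, d)` and `m * C(m-1, d-1) = d * C(m, d)` show that `d` divides
`m` times the difference, and `m` is coprime to `d`. Positivity holds because `C(n, d-1)` is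
strictly increasing in `n` once `d ≥ 2`.
-/

namespace Nat

theorem choose_modEq_choose_mod_of_lt {p n k : ℕ} [Fact p.Prime] (hk : k < p) :
    n.choose k ≡ (n % p).choose k [MOD p] := by
  simpa [Nat.mod_eq_of_lt hk, Nat.div_eq_of_lt hk] using
    Choose.choose_modEq_choose_mod_mul_choose_div_nat (n := n) (k := k) (p := p)

theorem prime_dvd_choose_add_sub_choose {p n k : ℕ} [Fact p.Prime] (hk : k < p) :
    p ∣ (n + p).choose k - n.choose k := by
  have hmod : (n + p).choose k ≡ n.choose k [MOD p] := by
    calc (n + p).choose k ≡ ((n + p) % p).choose k [MOD p] := choose_modEq_choose_mod_of_lt hk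
      _ = (n % p).choose k := by rw [Nat.add_mod_right]
      _ ≡ n.choose k [MOD p] := (choose_modEq_choose_mod_of_lt hk).symm
  exact (Nat.modEq_iff_dvd' (choose_le_choose k (le_add_right n p))).mp hmod.symm

theorem dvd_mul_choose_add_sub_choose {d m : ℕ} (hd : 0 < d) (hm : 0 < m) :
    d ∣ m * ((d + m - 1).choose (d - 1) - (m - 1).choose (d - 1)) := by
  obtain ⟨k, rfl⟩ : ∃ k, d = k + 1 := ⟨d - 1, by omega⟩
  obtain ⟨n, rfl⟩ : ∃ n, m = n + 1 := ⟨m - 1, by omega⟩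
  have hA : (k + 1) ∣ (n + 1) * (n + k + 1).choose k := by
    have h := choose_succ_right_eq (n + k + 1) k
    rw [show n + k + 1 - k = n + 1 by omega] at h
    exact ⟨(n + k + 1).choose (k + 1), by rw [mul_comm (n + 1), ← h, mul_comm]⟩
  have hB : (k + 1) ∣ (n + 1) * n.choose k :=
    ⟨(n + 1).choose (k + 1), by rw [add_one_mul_choose_eq, mul_comm]⟩
  simpa only [Nat.mul_sub, show k + 1 + (n + 1) - 1 = n + k + 1 by omega, Nat.add_sub_cancel]
    using Nat.dvd_sub hA hB

theorem choose_lt_choose_of_lt {a b c : ℕ} (hab : a < b) (hc : 0 < c) (hcb : c ≤ b) :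
    a.choose c < b.choose c := by
  obtain ⟨b, rfl⟩ : ∃ b', b = b' + 1 := ⟨b - 1, by omega⟩
  obtain ⟨c, rfl⟩ : ∃ c', c = c' + 1 := ⟨c - 1, by omega⟩
  rw [choose_succ_succ']
  have hpos : 0 < b.choose c := choose_pos (by omega)
  have hmono : a.choose (c + 1) ≤ b.choose (c + 1) := choose_le_choose _ (by omega)
  omega

end Nat

/-- For integers `d ≥ 2` and `m ≥ 2` with `m` coprime to `d` if `d` is not prime,
the quantity `b(d,m) = (1/d)(C(d+m-1, d-1) - C(m-1, d-1))` is a positive integer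
(note `Nat.choose (m-1) (d-1) = 0` when `m < d`). -/
theorem stmt8 (d m : ℕ) (hd : 2 ≤ d) (hm : 2 ≤ m)
    (hcop : ¬ d.Prime → Nat.Coprime m d) :
    d ∣ ((d + m - 1).choose (d - 1) - (m - 1).choose (d - 1)) ∧
      0 < ((d + m - 1).choose (d - 1) - (m - 1).choose (d - 1)) / d := by
  have hdvd : d ∣ (d + m - 1).choose (d - 1) - (m - 1).choose (d - 1) := by
    by_cases hp : d.Prime
    · have : Fact d.Prime := ⟨hp⟩
      rw [show d + m - 1 = m - 1 + d by omega]
      exact Nat.prime_dvd_choose_add_sub_choose (by omega)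
    · exact (hcop hp).symm.dvd_of_dvd_mul_left
        (Nat.dvd_mul_choose_add_sub_choose (by omega) (by omega))
  have hlt : (m - 1).choose (d - 1) < (d + m - 1).choose (d - 1) :=
    Nat.choose_lt_choose_of_lt (by omega) (by omega) (by omega)
  exact ⟨hdvd, Nat.div_pos (Nat.le_of_dvd (Nat.sub_pos_of_lt hlt) hdvd) (by omega)⟩
end

section
/- With the setup of the previous statement and additionally assuming L/K Galois with all Galois conjugation structure constants b^g_k in O_v (where g(ω_i) = Σ_k b^g_k ω_k) and the coordinates c_k of 1 in O_v: the level set K_v := {x ∈ (L ⊗ K_v)^* / K_v^* : H'_v(x) = 1} is a subgroup of the unit group, i.e., it contains the identity and is closed under multiplication and inversion. -/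
/-!
Write `‖x‖_v` for the maximum of `|x_k|_v` over the coordinates of `x` in the basis. Integrality
of the structure constants and the ultrametric inequality make `‖·‖_v` submultiplicative and
non-increasing under every `σ ∈ Gal(L/K)`, with `‖1‖_v = 1`. Since `N(x) = ∏_σ σ x`, this gives
`|N(x)|_v ≤ ‖x‖_v ^ d`, i.e. `H'_v ≥ 1` on `L^*`, and `H'_v` is submultiplicative. For inverses,
`x⁻¹ = N(x)⁻¹ ∏_{σ ≠ 1} σ x` gives `‖x⁻¹‖_v ≤ ‖x‖_v ^ (d - 1) / |N(x)|_v`, hence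
`H'_v(x⁻¹) ≤ H'_v(x) ^ (d - 1)`. So the set where `H'_v = 1` is closed under products and inverses.
-/

open Module Finset

section

variable {K : Type*} [Field K]

noncomputable def basisSupNorm {V ι : Type*} [AddCommGroup V] [Module K V] (b : Basis ι K V)
    (v : AbsoluteValue K ℝ) (x : V) : ℝ :=
  ⨆ i, v (b.repr x i)

section Module

variable {V W ι ι' : Type*} [AddCommGroup V] [Module K V] [AddCommGroup W] [Module K W]
  (b : Basis ι K V) (v : AbsoluteValue K ℝ)

lemma basisSupNorm_nonneg (x : V) : 0 ≤ basisSupNorm b v x :=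
  Real.iSup_nonneg_of_nonnegHomClass v _

lemma abv_repr_le_basisSupNorm [Finite ι] (x : V) (i : ι) :
    v (b.repr x i) ≤ basisSupNorm b v x :=
  Finite.le_ciSup_of_le i le_rfl

lemma basisSupNorm_pos [Finite ι] {x : V} (hx : x ≠ 0) : 0 < basisSupNorm b v x := by
  obtain ⟨i, hi⟩ : ∃ i, b.repr x i ≠ 0 := by
    by_contra! h
    exact hx (b.repr.injective (Finsupp.ext (by simpa using h)))
  exact (v.pos hi).trans_le (abv_repr_le_basisSupNorm b v x i)

lemma basisSupNorm_smul (c : K) (x : V) :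
    basisSupNorm b v (c • x) = v c * basisSupNorm b v x := by
  simp only [basisSupNorm, map_smul, Finsupp.smul_apply, smul_eq_mul, map_mul,
    Real.mul_iSup_of_nonneg (v.nonneg c)]

lemma basisSupNorm_map_le [Fintype ι] [Finite ι'] {v : AbsoluteValue K ℝ}
    (hv : IsNonarchimedean v) (b' : Basis ι' K W) (f : V →ₗ[K] W) {C : ℝ} (hC : 0 ≤ C)
    (hf : ∀ i k, v (b'.repr (f (b i)) k) ≤ C) (x : V) :
    basisSupNorm b' v (f x) ≤ C * basisSupNorm b v x := by
  classical
  set A := LinearMap.toMatrix b b' f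
  have hA : ⨆ ki : ι' × ι, v (A ki.1 ki.2) ≤ C :=
    Real.iSup_le (fun ki => by simpa [A, LinearMap.toMatrix_apply] using hf ki.2 ki.1) hC
  calc basisSupNorm b' v (f x) = ⨆ k, v (∑ i, A k i * b.repr x i) := by
        rw [basisSupNorm, ← LinearMap.toMatrix_mulVec_repr b b' f x]
        rfl
    _ ≤ (⨆ ki : ι' × ι, v (A ki.1 ki.2)) * basisSupNorm b v x :=
        hv.iSup_abv_linearMap_apply_le (fun ki => A ki.1 ki.2) (b.repr x)
    _ ≤ C * basisSupNorm b v x := mul_le_mul_of_nonneg_right hA (basisSupNorm_nonneg b v x)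

end Module

section Algebra

variable {L ι : Type*} [Fintype ι] {v : AbsoluteValue K ℝ}

lemma basisSupNorm_mul_le [Ring L] [Algebra K L] (hv : IsNonarchimedean v)
    (b : Basis ι K L) (hstr : ∀ i j k, v (b.repr (b i * b j) k) ≤ 1) (x y : L) :
    basisSupNorm b v (x * y) ≤ basisSupNorm b v x * basisSupNorm b v y := by
  have hcol : ∀ j k, v (b.repr (x * b j) k) ≤ basisSupNorm b v x := fun j k =>
    calc v (b.repr (x * b j) k) ≤ basisSupNorm b v (x * b j) := abv_repr_le_basisSupNorm b v _ k
      _ ≤ 1 * basisSupNorm b v x :=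
          basisSupNorm_map_le b hv b (LinearMap.mulRight K (b j)) zero_le_one
            (fun i k => hstr i j k) x
      _ = basisSupNorm b v x := one_mul _
  exact basisSupNorm_map_le b hv b (LinearMap.mulLeft K x) (basisSupNorm_nonneg b v x) hcol y

lemma basisSupNorm_one [Ring L] [Nontrivial L] [Algebra K L] (hv : IsNonarchimedean v)
    (b : Basis ι K L) (hstr : ∀ i j k, v (b.repr (b i * b j) k) ≤ 1)
    (hone : ∀ k, v (b.repr 1 k) ≤ 1) :
    basisSupNorm b v 1 = 1 := by
  have hle : basisSupNorm b v 1 ≤ 1 := Real.iSup_le hone zero_le_one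
  have hpos : 0 < basisSupNorm b v 1 := basisSupNorm_pos b v one_ne_zero
  have hsq : basisSupNorm b v 1 ≤ basisSupNorm b v 1 * basisSupNorm b v 1 := by
    simpa using basisSupNorm_mul_le hv b hstr 1 1
  nlinarith

lemma basisSupNorm_algEquiv_le [Ring L] [Algebra K L] (hv : IsNonarchimedean v)
    (b : Basis ι K L) (σ : L ≃ₐ[K] L) (hσ : ∀ i k, v (b.repr (σ (b i)) k) ≤ 1) (x : L) :
    basisSupNorm b v (σ x) ≤ basisSupNorm b v x := by
  simpa using basisSupNorm_map_le b hv b σ.toLinearMap zero_le_one hσ x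

lemma basisSupNorm_prod_le [CommRing L] [Nontrivial L] [Algebra K L] (hv : IsNonarchimedean v)
    (b : Basis ι K L) (hstr : ∀ i j k, v (b.repr (b i * b j) k) ≤ 1)
    (hone : ∀ k, v (b.repr 1 k) ≤ 1)
    {α : Type*} (s : Finset α) (f : α → L) :
    basisSupNorm b v (∏ a ∈ s, f a) ≤ ∏ a ∈ s, basisSupNorm b v (f a) :=
  Finset.le_prod_of_submultiplicative_of_nonneg _ (basisSupNorm_nonneg b v)
    (basisSupNorm_one hv b hstr hone).le (basisSupNorm_mul_le hv b hstr) s f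

noncomputable def basisHeight [Ring L] [Algebra K L] (b : Basis ι K L) (v : AbsoluteValue K ℝ)
    (x : L) : ℝ :=
  basisSupNorm b v x ^ Fintype.card ι / v (Algebra.norm K x)

lemma basisHeight_one [Ring L] [Nontrivial L] [Algebra K L] (hv : IsNonarchimedean v)
    (b : Basis ι K L) (hstr : ∀ i j k, v (b.repr (b i * b j) k) ≤ 1)
    (hone : ∀ k, v (b.repr 1 k) ≤ 1) :
    basisHeight b v 1 = 1 := by
  simp [basisHeight, basisSupNorm_one hv b hstr hone]

lemma basisHeight_mul_le [CommRing L] [Algebra K L] (hv : IsNonarchimedean v)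
    (b : Basis ι K L) (hstr : ∀ i j k, v (b.repr (b i * b j) k) ≤ 1) (x y : L) :
    basisHeight b v (x * y) ≤ basisHeight b v x * basisHeight b v y := by
  rw [basisHeight, basisHeight, basisHeight, map_mul, map_mul, ← mul_div_mul_comm, ← mul_pow]
  exact div_le_div_of_nonneg_right
    (pow_le_pow_left₀ (basisSupNorm_nonneg b v _) (basisSupNorm_mul_le hv b hstr x y) _)
    (mul_nonneg (v.nonneg _) (v.nonneg _))

end Algebra

section Galois

variable {L ι : Type*} [Field L] [Algebra K L] [IsGalois K L] [Fintype ι]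
  {v : AbsoluteValue K ℝ}

lemma natCard_aut_eq_card_basis (b : Basis ι K L) :
    Nat.card (L ≃ₐ[K] L) = Fintype.card ι := by
  have := b.finiteDimensional_of_finite
  rw [IsGalois.card_aut_eq_finrank, finrank_eq_card_basis b]

lemma abv_norm_le_basisSupNorm_pow (hv : IsNonarchimedean v) (b : Basis ι K L)
    (hstr : ∀ i j k, v (b.repr (b i * b j) k) ≤ 1)
    (hgal : ∀ (σ : L ≃ₐ[K] L) i k, v (b.repr (σ (b i)) k) ≤ 1)
    (hone : ∀ k, v (b.repr 1 k) ≤ 1) (x : L) :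
    v (Algebra.norm K x) ≤ basisSupNorm b v x ^ Fintype.card ι := by
  have := b.finiteDimensional_of_finite
  calc v (Algebra.norm K x) = basisSupNorm b v (algebraMap K L (Algebra.norm K x)) := by
        rw [Algebra.algebraMap_eq_smul_one, basisSupNorm_smul, basisSupNorm_one hv b hstr hone,
          mul_one]
    _ = basisSupNorm b v (∏ σ : L ≃ₐ[K] L, σ x) := by rw [Algebra.norm_eq_prod_automorphisms]
    _ ≤ ∏ σ : L ≃ₐ[K] L, basisSupNorm b v (σ x) := basisSupNorm_prod_le hv b hstr hone _ _
    _ ≤ ∏ _σ : L ≃ₐ[K] L, basisSupNorm b v x :=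
        prod_le_prod (fun _ _ => basisSupNorm_nonneg b v _)
          (fun σ _ => basisSupNorm_algEquiv_le hv b σ (hgal σ) x)
    _ = basisSupNorm b v x ^ Fintype.card ι := by
        rw [prod_const, card_univ, ← Nat.card_eq_fintype_card, natCard_aut_eq_card_basis b]

lemma inv_eq_norm_inv_smul_prod_algEquiv [FiniteDimensional K L] [DecidableEq (L ≃ₐ[K] L)]
    {x : L} (hx : x ≠ 0) :
    x⁻¹ = (Algebra.norm K x)⁻¹ • ∏ σ ∈ univ.erase (1 : L ≃ₐ[K] L), σ x := by
  have hN : algebraMap K L (Algebra.norm K x) =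
      x * ∏ σ ∈ univ.erase (1 : L ≃ₐ[K] L), σ x := by
    rw [Algebra.norm_eq_prod_automorphisms, ← mul_prod_erase univ _ (mem_univ 1)]
    rfl
  refine inv_eq_of_mul_eq_one_right ?_
  rw [mul_smul_comm, ← hN, Algebra.smul_def, ← map_mul,
    inv_mul_cancel₀ (Algebra.norm_ne_zero_iff.mpr hx), map_one]

lemma basisSupNorm_inv_le (hv : IsNonarchimedean v) (b : Basis ι K L)
    (hstr : ∀ i j k, v (b.repr (b i * b j) k) ≤ 1)
    (hgal : ∀ (σ : L ≃ₐ[K] L) i k, v (b.repr (σ (b i)) k) ≤ 1)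
    (hone : ∀ k, v (b.repr 1 k) ≤ 1) {x : L} (hx : x ≠ 0) :
    basisSupNorm b v x⁻¹ ≤ basisSupNorm b v x ^ (Fintype.card ι - 1) / v (Algebra.norm K x) := by
  classical
  have := b.finiteDimensional_of_finite
  rw [inv_eq_norm_inv_smul_prod_algEquiv (K := K) hx, basisSupNorm_smul, map_inv₀, inv_mul_eq_div]
  refine div_le_div_of_nonneg_right ?_ (v.nonneg _)
  calc basisSupNorm b v (∏ σ ∈ univ.erase (1 : L ≃ₐ[K] L), σ x)
      ≤ ∏ σ ∈ univ.erase (1 : L ≃ₐ[K] L), basisSupNorm b v (σ x) :=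
        basisSupNorm_prod_le hv b hstr hone _ _
    _ ≤ ∏ _σ ∈ univ.erase (1 : L ≃ₐ[K] L), basisSupNorm b v x :=
        prod_le_prod (fun _ _ => basisSupNorm_nonneg b v _)
          (fun σ _ => basisSupNorm_algEquiv_le hv b σ (hgal σ) x)
    _ = basisSupNorm b v x ^ (Fintype.card ι - 1) := by
        rw [prod_const, card_erase_of_mem (mem_univ _), card_univ, ← Nat.card_eq_fintype_card,
          natCard_aut_eq_card_basis b]

lemma one_le_basisHeight (hv : IsNonarchimedean v) (b : Basis ι K L)
    (hstr : ∀ i j k, v (b.repr (b i * b j) k) ≤ 1)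
    (hgal : ∀ (σ : L ≃ₐ[K] L) i k, v (b.repr (σ (b i)) k) ≤ 1)
    (hone : ∀ k, v (b.repr 1 k) ≤ 1) {x : L} (hx : x ≠ 0) :
    1 ≤ basisHeight b v x := by
  have := b.finiteDimensional_of_finite
  rw [basisHeight, one_le_div (v.pos (Algebra.norm_ne_zero_iff.mpr hx))]
  exact abv_norm_le_basisSupNorm_pow hv b hstr hgal hone x

lemma basisHeight_inv_le (hv : IsNonarchimedean v) (b : Basis ι K L)
    (hstr : ∀ i j k, v (b.repr (b i * b j) k) ≤ 1)
    (hgal : ∀ (σ : L ≃ₐ[K] L) i k, v (b.repr (σ (b i)) k) ≤ 1)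
    (hone : ∀ k, v (b.repr 1 k) ≤ 1) {x : L} (hx : x ≠ 0) :
    basisHeight b v x⁻¹ ≤ basisHeight b v x ^ (Fintype.card ι - 1) := by
  have := b.finiteDimensional_of_finite
  have := b.index_nonempty
  obtain ⟨m, hm⟩ : ∃ m, Fintype.card ι = m + 1 := Nat.exists_eq_add_one.mpr Fintype.card_pos
  have hN : v (Algebra.norm K x) ≠ 0 := v.ne_zero (Algebra.norm_ne_zero_iff.mpr hx)
  have hinv := basisSupNorm_inv_le hv b hstr hgal hone hx
  rw [hm, Nat.add_sub_cancel] at hinv ⊢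
  calc basisHeight b v x⁻¹ = basisSupNorm b v x⁻¹ ^ (m + 1) * v (Algebra.norm K x) := by
        rw [basisHeight, hm, Algebra.norm_inv, map_inv₀, div_inv_eq_mul]
    _ ≤ (basisSupNorm b v x ^ m / v (Algebra.norm K x)) ^ (m + 1) * v (Algebra.norm K x) :=
        mul_le_mul_of_nonneg_right
          (pow_le_pow_left₀ (basisSupNorm_nonneg b v _) hinv _) (v.nonneg _)
    _ = basisHeight b v x ^ m := by
        rw [basisHeight, hm, div_pow, div_pow, ← pow_mul, ← pow_mul, pow_succ _ m]
        field_simp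
        ring

end Galois

end

/-- With `L/K` Galois of degree `d` with basis `ω_0, ..., ω_{d-1}`, `v` a non-archimedean
absolute value on `K` with all multiplication structure constants, Galois conjugation
structure constants, and the coordinates of `1` being `v`-integral, the level set
`{x : H'_v(x) = 1}` is a subgroup: it contains the identity and is closed under
multiplication and inversion. Here `H'_v(X) = (max_k |X_k|_v)^d / |N_{L/K}(X)|_v` in
terms of the coordinates `X_k` of `X` with respect to the basis. -/
theorem stmt14 {K L : Type*} [Field K] [Field L] [Algebra K L] [IsGalois K L]
    (d : ℕ) (hd : 0 < d) (b : Module.Basis (Fin d) K L)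
    (v : AbsoluteValue K ℝ)
    (hna : ∀ a c : K, v (a + c) ≤ max (v a) (v c))
    (hstr : ∀ i j k : Fin d, v (b.repr (b i * b j) k) ≤ 1)
    (hgal : ∀ (g : L ≃ₐ[K] L) (i k : Fin d), v (b.repr (g (b i)) k) ≤ 1)
    (hone : ∀ k : Fin d, v (b.repr 1 k) ≤ 1)
    (H' : L → ℝ)
    (hH' : ∀ X : L, H' X =
      (Finset.univ.sup' (Finset.univ_nonempty_iff.mpr ⟨⟨0, hd⟩⟩)
        (fun k => v (b.repr X k))) ^ d / v (Algebra.norm K X)) :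
    H' 1 = 1 ∧
    (∀ X Y : L, X ≠ 0 → Y ≠ 0 → H' X = 1 → H' Y = 1 → H' (X * Y) = 1) ∧
    (∀ X : L, X ≠ 0 → H' X = 1 → H' X⁻¹ = 1) := by
  have : Nonempty (Fin d) := ⟨⟨0, hd⟩⟩
  obtain rfl : H' = basisHeight b v := by
    funext X
    rw [hH', basisHeight, basisSupNorm, Fintype.card_fin, Finset.sup'_univ_eq_ciSup]
  refine ⟨basisHeight_one hna b hstr hone, fun X Y hX hY hXH hYH => ?_, fun X hX hXH => ?_⟩
  · refine le_antisymm ?_ (one_le_basisHeight hna b hstr hgal hone (mul_ne_zero hX hY))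
    simpa [hXH, hYH] using basisHeight_mul_le hna b hstr X Y
  · refine le_antisymm ?_ (one_le_basisHeight hna b hstr hgal hone (inv_ne_zero hX))
    simpa [hXH] using basisHeight_inv_le hna b hstr hgal hone hX
end
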